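/- arXiv:1307.4976 — 3 statements merged into one kernel-verified Lean document; each statement's English description precedes it below -/
import Mathlib

section
/- For every u in the range of the spectral projector of H = -Δ + |x|² on [0, λ], λ ≥ 1, one has |u(x)| ≤ C λ^{d/4} exp(-c|x|²/(2λ)) ‖u‖_{L²(ℝ^d)} for all x ∈ ℝ^d, where c, C > 0 are independent of x and λ. -/
/-!
By orthonormality and Cauchy–Schwarz, `|u(x)|² ≤ π(λ; x, x) ‖u‖²` with the spectral function
`π(λ; x, x) = ∑_{λ_j ≤ λ} |φ_j(x)|²`. Since `e^{1 - λ_j/λ} ≥ 1` for `λ_j ≤ λ`, the spectral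
function is at most `e` times the heat kernel `∑_j e^{-λ_j/λ} |φ_j(x)|²` at time `1/λ`, which
Mehler's formula evaluates as `(2π sinh(2/λ))^{-d/2} e^{-|x|² tanh(1/λ)}`. Finally
`sinh s ≥ s` and `tanh t ≥ t / cosh 1` on `[0, 1]`.
-/

open MeasureTheory Real Finset ComplexConjugate

section Orthonormal

variable {α ι : Type*} [MeasurableSpace α] {μ : Measure α} [DecidableEq ι]

theorem MeasureTheory.MemLp.integrable_mul_conj {f g : α → ℂ} (hf : MemLp f 2 μ)
    (hg : MemLp g 2 μ) :
    Integrable (fun y => f y * conj (g y)) μ := by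
  have hg' : MemLp (fun y => conj (g y)) 2 μ :=
    hg.of_le_mul (c := 1) (Complex.continuous_conj.comp_aestronglyMeasurable hg.1)
      (by filter_upwards with y; simp)
  exact memLp_one_iff_integrable.1 (hg'.smul (p := 2) (q := 2) hf)

variable {φ : ι → α → ℂ}

theorem integral_norm_sq_sum_of_orthonormal (hL2 : ∀ j, MemLp (φ j) 2 μ)
    (hortho : ∀ i j, ∫ y, φ i y * conj (φ j y) ∂μ = if i = j then (1 : ℂ) else 0)
    (s : Finset ι) (c : ι → ℂ) :
    ∫ y, ‖∑ j ∈ s, c j * φ j y‖ ^ 2 ∂μ = ∑ j ∈ s, ‖c j‖ ^ 2 := by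
  have hint : ∀ i j, Integrable (fun y => c i * conj (c j) * (φ i y * conj (φ j y))) μ :=
    fun i j => ((hL2 i).integrable_mul_conj (hL2 j)).const_mul _
  have hexpand : ∀ y, (‖∑ j ∈ s, c j * φ j y‖ ^ 2 : ℂ) =
      ∑ i ∈ s, ∑ j ∈ s, c i * conj (c j) * (φ i y * conj (φ j y)) := by
    intro y
    rw [← Complex.mul_conj', map_sum, sum_mul_sum]
    refine sum_congr rfl fun i _ => sum_congr rfl fun j _ => ?_
    simp only [map_mul]
    ring
  apply Complex.ofReal_injective
  rw [← integral_complex_ofReal]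
  push_cast
  simp only [hexpand]
  rw [integral_finsetSum s fun i _ => integrable_finsetSum s fun j _ => hint i j]
  refine sum_congr rfl fun i hi => ?_
  rw [integral_finsetSum s fun j _ => hint i j]
  simp only [integral_const_mul, hortho, mul_ite, mul_one, mul_zero, sum_ite_eq, if_pos hi,
    Complex.mul_conj']

theorem norm_le_sqrt_sum_mul_integral (hL2 : ∀ j, MemLp (φ j) 2 μ)
    (hortho : ∀ i j, ∫ y, φ i y * conj (φ j y) ∂μ = if i = j then (1 : ℂ) else 0)
    (s : Finset ι) (c : ι → ℂ) (u : α → ℂ) (hu : ∀ y, u y = ∑ j ∈ s, c j * φ j y) (x : α) :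
    ‖u x‖ ≤ √(∑ j ∈ s, ‖φ j x‖ ^ 2) * (∫ y, ‖u y‖ ^ 2 ∂μ) ^ ((1 : ℝ) / 2) := by
  simp only [hu, integral_norm_sq_sum_of_orthonormal hL2 hortho, ← sqrt_eq_rpow,
    ← sqrt_mul' _ (sum_nonneg fun j _ => sq_nonneg ‖c j‖)]
  refine le_sqrt_of_sq_le ?_
  calc ‖∑ j ∈ s, c j * φ j x‖ ^ 2 ≤ (∑ j ∈ s, ‖c j‖ * ‖φ j x‖) ^ 2 := by
        gcongr
        exact (norm_sum_le _ _).trans_eq (by simp)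
    _ ≤ _ := by rw [mul_comm]; exact sum_mul_sq_le_sq_mul_sq s _ _

end Orthonormal

theorem sum_le_exp_one_mul_tsum {ι : Type*} {a lam : ι → ℝ} {t : ℝ} (s : Finset ι)
    (ha : ∀ j, 0 ≤ a j) (hs : ∀ j ∈ s, t * lam j ≤ 1)
    (hsum : Summable fun j => exp (-t * lam j) * a j) :
    ∑ j ∈ s, a j ≤ exp 1 * ∑' j, exp (-t * lam j) * a j := by
  calc ∑ j ∈ s, a j ≤ ∑ j ∈ s, exp 1 * (exp (-t * lam j) * a j) := by
        refine sum_le_sum fun j hj => ?_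
        rw [← mul_assoc, ← exp_add]
        exact le_mul_of_one_le_left (ha j) (one_le_exp (by linarith [hs j hj]))
    _ ≤ exp 1 * ∑' j, exp (-t * lam j) * a j := by
        rw [← mul_sum]
        exact mul_le_mul_of_nonneg_left
          (hsum.sum_le_tsum s fun j _ => mul_nonneg (exp_nonneg _) (ha j)) (exp_nonneg 1)

theorem div_cosh_one_le_tanh {t : ℝ} (h0 : 0 ≤ t) (h1 : t ≤ 1) : t / cosh 1 ≤ tanh t := by
  rw [tanh_eq_sinh_div_cosh]
  refine div_le_div₀ (h0.trans (self_le_sinh_iff.2 h0)) (self_le_sinh_iff.2 h0) (cosh_pos t) ?_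
  rw [cosh_le_cosh, abs_of_nonneg h0, abs_one]
  exact h1

theorem two_pi_sinh_rpow_neg_le {t p : ℝ} (ht : 0 < t) (hp : 0 ≤ p) :
    (2 * π * sinh (2 * t)) ^ (-p) ≤ (4 * π * t) ^ (-p) := by
  refine rpow_le_rpow_of_nonpos (by positivity) ?_ (neg_nonpos.2 hp)
  have := self_le_sinh_iff.2 (by positivity : 0 ≤ 2 * t)
  nlinarith [pi_pos]

theorem exp_one_mul_mehler_kernel_le (d : ℕ) {lambda : ℝ} (hl : 1 ≤ lambda) (r : ℝ) :
    exp 1 * ((2 * π * sinh (2 * lambda⁻¹)) ^ (-(d : ℝ) / 2) * exp (-r ^ 2 * tanh lambda⁻¹)) ≤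
      (exp (1 / 2) * (4 * π) ^ (-(d : ℝ) / 4) * lambda ^ ((d : ℝ) / 4) *
        exp (-(cosh 1)⁻¹ * r ^ 2 / (2 * lambda))) ^ 2 := by
  have hl0 : 0 < lambda := by linarith
  have hsinh := two_pi_sinh_rpow_neg_le (inv_pos.2 hl0) (by positivity : 0 ≤ (d : ℝ) / 2)
  have htanh := div_cosh_one_le_tanh (inv_nonneg.2 hl0.le) (inv_le_one_of_one_le₀ hl)
  have hexp : exp (-r ^ 2 * tanh lambda⁻¹) ≤ exp (-(cosh 1)⁻¹ * r ^ 2 / lambda) := by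
    rw [exp_le_exp]
    have := mul_le_mul_of_nonneg_left htanh (sq_nonneg r)
    rw [div_eq_mul_inv] at this ⊢
    nlinarith
  calc _ ≤ exp 1 * ((4 * π * lambda⁻¹) ^ (-(d : ℝ) / 2) *
          exp (-(cosh 1)⁻¹ * r ^ 2 / lambda)) := by
        rw [neg_div]; gcongr
    _ = _ := by
        have hsq : ∀ {a : ℝ} (p : ℝ), 0 ≤ a → (a ^ (p / 4)) ^ 2 = a ^ (p / 2) := fun p ha => by
          rw [← rpow_mul_natCast ha]; ring_nf
        rw [mul_pow, mul_pow, mul_pow, hsq _ (by positivity), hsq _ hl0.le, ← exp_nat_mul,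
          ← exp_nat_mul, mul_rpow (by positivity) (by positivity), inv_rpow hl0.le, neg_div,
          rpow_neg hl0.le, inv_inv]
        ring_nf

theorem stmt9_general (d : ℕ)
    (φ : ℕ → EuclideanSpace ℝ (Fin d) → ℂ) (lam : ℕ → ℝ)
    (hL2 : ∀ j, MemLp (φ j) 2 (volume : Measure (EuclideanSpace ℝ (Fin d))))
    (hortho : ∀ i j, ∫ x, φ i x * (starRingEnd ℂ) (φ j x) = if i = j then (1 : ℂ) else 0)
    (hfin : ∀ lambda : ℝ, {j | lam j ≤ lambda}.Finite)
    (hSum : ∀ t : ℝ, 0 < t → ∀ x,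
      Summable (fun j => Real.exp (-t * lam j) * ‖φ j x‖ ^ 2))
    (hMehler : ∀ t : ℝ, 0 < t → ∀ x,
      ∑' j, Real.exp (-t * lam j) * ‖φ j x‖ ^ 2 =
        (2 * π * Real.sinh (2 * t)) ^ (-(d : ℝ)/2) * Real.exp (-‖x‖ ^ 2 * Real.tanh t)) :
    ∃ c > 0, ∃ C > 0, ∀ lambda : ℝ, 1 ≤ lambda →
      ∀ (co : ℕ → ℂ) (u : EuclideanSpace ℝ (Fin d) → ℂ),
        (∀ x, u x = ∑ j ∈ (hfin lambda).toFinset, co j * φ j x) →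
        ∀ x, ‖u x‖ ≤
          C * lambda ^ ((d : ℝ)/4) * Real.exp (-c * ‖x‖ ^ 2 / (2 * lambda)) *
            (∫ y, ‖u y‖ ^ 2) ^ ((1 : ℝ)/2) := by
  refine ⟨(cosh 1)⁻¹, by positivity, exp (1 / 2) * (4 * π) ^ (-(d : ℝ) / 4), by positivity, ?_⟩
  intro lambda hl co u hu x
  have ht : 0 < lambda⁻¹ := inv_pos.2 (by linarith)
  have hspec : ∀ j ∈ (hfin lambda).toFinset, lambda⁻¹ * lam j ≤ 1 := fun j hj =>
    inv_mul_le_one_of_le₀ ((hfin lambda).mem_toFinset.1 hj) (by linarith)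
  have hkernel : ∑ j ∈ (hfin lambda).toFinset, ‖φ j x‖ ^ 2 ≤
      (exp (1 / 2) * (4 * π) ^ (-(d : ℝ) / 4) * lambda ^ ((d : ℝ) / 4) *
        exp (-(cosh 1)⁻¹ * ‖x‖ ^ 2 / (2 * lambda))) ^ 2 :=
    calc _ ≤ exp 1 * ∑' j, exp (-lambda⁻¹ * lam j) * ‖φ j x‖ ^ 2 :=
          sum_le_exp_one_mul_tsum _ (fun j => sq_nonneg _) hspec (hSum _ ht x)
      _ ≤ _ := by rw [hMehler _ ht x]; exact exp_one_mul_mehler_kernel_le d hl ‖x‖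
  calc ‖u x‖ ≤ √(∑ j ∈ (hfin lambda).toFinset, ‖φ j x‖ ^ 2) *
        (∫ y, ‖u y‖ ^ 2) ^ ((1 : ℝ) / 2) :=
        norm_le_sqrt_sum_mul_integral hL2 hortho _ co u hu x
    _ ≤ _ := by
        gcongr
        exact sqrt_le_iff.2 ⟨by positivity, hkernel⟩

/-- Pointwise bound for spectrally localised functions of the harmonic oscillator:
there exist `c, C > 0` such that for every `λ ≥ 1` and every `u` in the range of the
spectral projector on `[0, λ]` (i.e. `u = ∑_{lam j ≤ λ} c_j φ_j`),
`|u(x)| ≤ C λ^{d/4} exp(-c |x|²/(2λ)) ‖u‖_{L²}` for all `x ∈ ℝ^d`. -/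
theorem stmt9 (d : ℕ) (hd : 1 ≤ d)
    (φ : ℕ → EuclideanSpace ℝ (Fin d) → ℂ) (lam : ℕ → ℝ) (hlam : ∀ j, 0 < lam j)
    (hL2 : ∀ j, MemLp (φ j) 2 (volume : Measure (EuclideanSpace ℝ (Fin d))))
    (hortho : ∀ i j, ∫ x, φ i x * (starRingEnd ℂ) (φ j x) = if i = j then (1 : ℂ) else 0)
    (hfin : ∀ lambda : ℝ, {j | lam j ≤ lambda}.Finite)
    (hSum : ∀ t : ℝ, 0 < t → ∀ x,
      Summable (fun j => Real.exp (-t * lam j) * ‖φ j x‖ ^ 2))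
    (hMehler : ∀ t : ℝ, 0 < t → ∀ x,
      ∑' j, Real.exp (-t * lam j) * ‖φ j x‖ ^ 2 =
        (2 * π * Real.sinh (2 * t)) ^ (-(d : ℝ)/2) * Real.exp (-‖x‖ ^ 2 * Real.tanh t)) :
    ∃ c > 0, ∃ C > 0, ∀ lambda : ℝ, 1 ≤ lambda →
      ∀ (co : ℕ → ℂ) (u : EuclideanSpace ℝ (Fin d) → ℂ),
        (∀ x, u x = ∑ j ∈ (hfin lambda).toFinset, co j * φ j x) →
        ∀ x, ‖u x‖ ≤
          C * lambda ^ ((d : ℝ)/4) * Real.exp (-c * ‖x‖ ^ 2 / (2 * lambda)) *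
            (∫ y, ‖u y‖ ^ 2) ^ ((1 : ℝ)/2) :=
  stmt9_general d φ lam hL2 hortho hfin hSum hMehler
end

section
/- For each N ≥ 1 let A(N) = ∫_{ℝ^N} |x|_N dν^{⊗N}(x), where |x|_N = (x_1² + ⋯ + x_N²)^{1/2} and ν is a probability measure on ℝ with mean 0 and variance 1 (and finite second moment). Then there exists C_1 > 0 such that C_1 √N ≤ A(N) ≤ √N for all N ≥ 1. -/
/-!
The upper bound is Jensen's inequality for the concave square root: `E √S ≤ √(E S) = √N`, where
`S = x₁² + ⋯ + x_N²`. For the lower bound, `T = ∑ min(xᵢ², 1)` satisfies both `T ≤ S` and `T ≤ N`,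
so `T ≤ √(N S)`; taking expectations gives `N c ≤ √N · E √S` with `c = E_ν min(x², 1)`, and `c > 0`
because `ν` is not the Dirac mass at `0`.
-/

open MeasureTheory Real Finset

lemma sum_min_one_le_sqrt_card_mul_sqrt_sum {ι : Type*} [Fintype ι] {a : ι → ℝ}
    (ha : ∀ i, 0 ≤ a i) :
    ∑ i, min (a i) 1 ≤ √(Fintype.card ι) * √(∑ i, a i) := by
  have hT : 0 ≤ ∑ i, min (a i) 1 := sum_nonneg fun i _ => le_min (ha i) zero_le_one
  have hTS : ∑ i, min (a i) 1 ≤ ∑ i, a i := sum_le_sum fun i _ => min_le_left _ _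
  have hTN : ∑ i, min (a i) 1 ≤ Fintype.card ι := by
    simpa using sum_le_sum fun i (_ : i ∈ univ) => min_le_right (a i) 1
  rw [← sqrt_mul (Nat.cast_nonneg _)]
  exact le_sqrt_of_sq_le (by nlinarith)

lemma integrable_min_sq_one {ν : Measure ℝ} [IsFiniteMeasure ν] :
    Integrable (fun t : ℝ => min (t ^ 2) 1) ν := by
  refine (integrable_const (1 : ℝ)).mono' (by fun_prop) (ae_of_all _ fun t => ?_)
  rw [norm_of_nonneg (le_min (sq_nonneg t) zero_le_one)]
  exact min_le_right _ _

lemma integral_min_sq_one_pos {ν : Measure ℝ} [IsFiniteMeasure ν] (h : ∫ t, t ^ 2 ∂ν ≠ 0) :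
    0 < ∫ t, min (t ^ 2) 1 ∂ν := by
  refine (integral_nonneg fun t => le_min (sq_nonneg t) zero_le_one).lt_of_ne fun h0 => h ?_
  have hmin := (integral_eq_zero_iff_of_nonneg (fun t => le_min (sq_nonneg t) zero_le_one)
    integrable_min_sq_one).1 h0.symm
  refine integral_eq_zero_of_ae ?_
  filter_upwards [hmin] with t ht
  rcases le_total (t ^ 2) 1 with h' | h'
  · rwa [min_eq_left h'] at ht
  · exact absurd ((min_eq_right h').symm.trans ht) one_ne_zero

section ProductMeasure

variable {ν : Measure ℝ} [IsProbabilityMeasure ν] {ι : Type*} [Fintype ι]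

lemma integrable_sum_sq_pi (h : Integrable (fun t : ℝ => t ^ 2) ν) :
    Integrable (fun x : ι → ℝ => ∑ j, x j ^ 2) (Measure.pi fun _ => ν) :=
  integrable_finsetSum _ fun _ _ =>
    integrable_comp_eval (μ := fun _ : ι => ν) (f := fun t : ℝ => t ^ 2) h

lemma integral_sum_sq_pi (h : Integrable (fun t : ℝ => t ^ 2) ν) :
    ∫ x, ∑ j, x j ^ 2 ∂(Measure.pi fun _ : ι => ν) = Fintype.card ι * ∫ t, t ^ 2 ∂ν := by
  rw [integral_finsetSum _ fun _ _ =>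
    integrable_comp_eval (μ := fun _ : ι => ν) (f := fun t : ℝ => t ^ 2) h]
  have hj (j : ι) : ∫ x, x j ^ 2 ∂(Measure.pi fun _ : ι => ν) = ∫ t, t ^ 2 ∂ν :=
    integral_comp_eval (μ := fun _ : ι => ν) (f := fun t : ℝ => t ^ 2) h.aestronglyMeasurable
  simp [hj]

lemma integrable_sqrt_sum_sq_pi (h : Integrable (fun t : ℝ => t ^ 2) ν) :
    Integrable (fun x : ι → ℝ => √(∑ j, x j ^ 2)) (Measure.pi fun _ => ν) := by
  have hmeas : Measurable fun x : ι → ℝ => √(∑ j, x j ^ 2) := by fun_prop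
  refine ((memLp_two_iff_integrable_sq hmeas.aestronglyMeasurable).2 ?_).integrable one_le_two
  refine (integrable_sum_sq_pi h).congr (ae_of_all _ fun x => ?_)
  exact (sq_sqrt (sum_nonneg fun j _ => sq_nonneg (x j))).symm

lemma integral_sqrt_sum_sq_pi_le (h : Integrable (fun t : ℝ => t ^ 2) ν) :
    ∫ x, √(∑ j, x j ^ 2) ∂(Measure.pi fun _ : ι => ν) ≤
      √(Fintype.card ι * ∫ t, t ^ 2 ∂ν) := by
  rw [← integral_sum_sq_pi h]
  exact strictConcaveOn_sqrt.concaveOn.le_map_integral continuous_sqrt.continuousOn isClosed_Ici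
    (ae_of_all _ fun x => sum_nonneg fun j _ => sq_nonneg (x j)) (integrable_sum_sq_pi h)
    (integrable_sqrt_sum_sq_pi h)

lemma integral_min_sq_one_mul_sqrt_card_le [Nonempty ι] (h : Integrable (fun t : ℝ => t ^ 2) ν) :
    (∫ t, min (t ^ 2) 1 ∂ν) * √(Fintype.card ι) ≤
      ∫ x, √(∑ j, x j ^ 2) ∂(Measure.pi fun _ : ι => ν) := by
  set n : ℝ := (Fintype.card ι : ℝ)
  set c := ∫ t, min (t ^ 2) 1 ∂ν
  have hint (j : ι) : Integrable (fun x : ι → ℝ => min (x j ^ 2) 1) (Measure.pi fun _ => ν) :=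
    integrable_comp_eval (μ := fun _ : ι => ν) (f := fun t : ℝ => min (t ^ 2) 1)
      integrable_min_sq_one
  have hj (j : ι) : ∫ x, min (x j ^ 2) 1 ∂(Measure.pi fun _ : ι => ν) = c :=
    integral_comp_eval (μ := fun _ : ι => ν) (f := fun t : ℝ => min (t ^ 2) 1)
      integrable_min_sq_one.aestronglyMeasurable
  have hpos : 0 < √n := sqrt_pos.2 (by simp [n, Fintype.card_pos])
  refine le_of_mul_le_mul_left ?_ hpos
  calc √n * (c * √n) = ∫ x, ∑ j, min (x j ^ 2) 1 ∂(Measure.pi fun _ : ι => ν) := by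
        rw [integral_finsetSum _ fun j _ => hint j, mul_left_comm, mul_self_sqrt (by positivity)]
        simp [hj, n, mul_comm]
    _ ≤ ∫ x, √n * √(∑ j, x j ^ 2) ∂(Measure.pi fun _ : ι => ν) :=
        integral_mono (integrable_finsetSum _ fun j _ => hint j)
          ((integrable_sqrt_sum_sq_pi h).const_mul _)
          fun x => sum_min_one_le_sqrt_card_mul_sqrt_sum fun j => sq_nonneg (x j)
    _ = √n * ∫ x, √(∑ j, x j ^ 2) ∂(Measure.pi fun _ : ι => ν) := integral_const_mul _ _

end ProductMeasure

theorem stmt15_general (ν : Measure ℝ) [IsProbabilityMeasure ν]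
    (hvar : ∫ x, x ^ 2 ∂ν = 1) :
    ∃ C₁ > 0, ∀ N : ℕ, 1 ≤ N →
      C₁ * Real.sqrt N ≤
        (∫ x, Real.sqrt (∑ j, (x j) ^ 2) ∂(Measure.pi (fun _ : Fin N => ν))) ∧
      (∫ x, Real.sqrt (∑ j, (x j) ^ 2) ∂(Measure.pi (fun _ : Fin N => ν))) ≤
        Real.sqrt N := by
  have hint : Integrable (fun t : ℝ => t ^ 2) ν := by
    by_contra h
    simp [integral_undef h] at hvar
  refine ⟨_, integral_min_sq_one_pos (hvar ▸ one_ne_zero), fun N hN => ⟨?_, ?_⟩⟩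
  · have : Nonempty (Fin N) := ⟨⟨0, hN⟩⟩
    simpa using integral_min_sq_one_mul_sqrt_card_le (ι := Fin N) hint
  · simpa [hvar] using integral_sqrt_sum_sq_pi_le (ι := Fin N) hint

/-- Two-sided estimate of `A(N) = ∫ |x|_N dν^{⊗N}` for a centred normalized probability
measure `ν` on `ℝ`: there is `C₁ > 0` with `C₁ √N ≤ A(N) ≤ √N` for all `N ≥ 1`. -/
theorem stmt15 (ν : Measure ℝ) [IsProbabilityMeasure ν]
    (hmean : ∫ x, x ∂ν = 0) (hvar : ∫ x, x ^ 2 ∂ν = 1) :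
    ∃ C₁ > 0, ∀ N : ℕ, 1 ≤ N →
      C₁ * Real.sqrt N ≤
        (∫ x, Real.sqrt (∑ j, (x j) ^ 2) ∂(Measure.pi (fun _ : Fin N => ν))) ∧
      (∫ x, Real.sqrt (∑ j, (x j) ^ 2) ∂(Measure.pi (fun _ : Fin N => ν))) ≤
        Real.sqrt N :=
  stmt15_general ν hvar
end

section
/- Let F : S → ℝ be a Lipschitz function on the unit sphere S of ℝ^N with |F(u) - F(v)| ≤ ‖F‖_Lip |u - v| for all u, v ∈ S, let x_0 ∈ S be fixed, and define G : ℝ^N \ {0} → ℝ by G(x) = |x|(F(x/|x|) - F(x_0)), extended by G(0) = 0. Then G is Lipschitz on ℝ^N with Lipschitz constant at most 2(π + 1)‖F‖_Lip (with respect to the Euclidean norm), and F(x/|x|) - F(y/|y|) = G(x/|x|) - G(y/|y|) for all nonzero x, y. -/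
open Real

/-- Radial extension lemma: if `F` is `K`-Lipschitz on the unit sphere of `ℝ^N`,
`x₀` a fixed unit vector, and `G(x) = ‖x‖ (F(x/‖x‖) - F(x₀))` (with `G(0) = 0`), then
`G` is Lipschitz on `ℝ^N` with constant at most `2(π+1)K`, and
`F(x/‖x‖) - F(y/‖y‖) = G(x/‖x‖) - G(y/‖y‖)` for all nonzero `x, y`. -/
theorem stmt18 (N : ℕ) (F : EuclideanSpace ℝ (Fin N) → ℝ) (K : ℝ) (hK : 0 ≤ K)
    (hF : ∀ u v : EuclideanSpace ℝ (Fin N), ‖u‖ = 1 → ‖v‖ = 1 →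
      |F u - F v| ≤ K * ‖u - v‖)
    (x₀ : EuclideanSpace ℝ (Fin N)) (hx₀ : ‖x₀‖ = 1)
    (G : EuclideanSpace ℝ (Fin N) → ℝ)
    (hG : G 0 = 0 ∧ ∀ x ≠ (0 : EuclideanSpace ℝ (Fin N)), G x = ‖x‖ * (F (‖x‖⁻¹ • x) - F x₀)) :
    (∀ x y, |G x - G y| ≤ 2 * (π + 1) * K * ‖x - y‖) ∧
    (∀ x y : EuclideanSpace ℝ (Fin N), x ≠ 0 → y ≠ 0 →
      F (‖x‖⁻¹ • x) - F (‖y‖⁻¹ • y) = G (‖x‖⁻¹ • x) - G (‖y‖⁻¹ • y)) := by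
  obtain ⟨hG0, hGx⟩ := hG
  have hunit : ∀ x : EuclideanSpace ℝ (Fin N), x ≠ 0 → ‖‖x‖⁻¹ • x‖ = 1 :=
    fun x hx => norm_smul_inv_norm hx
  have hb1 : ∀ x : EuclideanSpace ℝ (Fin N), x ≠ 0 →
      |F (‖x‖⁻¹ • x) - F x₀| ≤ 2 * K := by
    intro x hx
    have h := hF (‖x‖⁻¹ • x) x₀ (hunit x hx) hx₀
    have h2 : ‖(‖x‖⁻¹ • x) - x₀‖ ≤ 2 := by
      calc ‖(‖x‖⁻¹ • x) - x₀‖ ≤ ‖‖x‖⁻¹ • x‖ + ‖x₀‖ := norm_sub_le _ _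
        _ = 2 := by rw [hunit x hx, hx₀]; norm_num
    nlinarith
  have key : ∀ x y : EuclideanSpace ℝ (Fin N), x ≠ 0 → y ≠ 0 →
      |G x - G y| ≤ 4 * K * ‖x - y‖ := by
    intro x y hx hy
    rw [hGx x hx, hGx y hy]
    set u := ‖x‖⁻¹ • x with hu_def
    set v := ‖y‖⁻¹ • y with hv_def
    have hu := hunit x hx
    have hv := hunit y hy
    have h1 : ‖x‖ * (F u - F x₀) - ‖y‖ * (F v - F x₀)
        = (‖x‖ - ‖y‖) * (F u - F x₀) + ‖y‖ * (F u - F v) := by ring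
    rw [h1]
    have b1 := hb1 x hx
    have b2 : |F u - F v| ≤ K * ‖u - v‖ := hF u v hu hv
    -- ‖y‖ * ‖u - v‖ ≤ 2 * ‖x - y‖
    have hxu : ‖x‖ • u = x := by
      rw [hu_def, smul_smul, mul_inv_cancel₀ (norm_ne_zero_iff.mpr hx), one_smul]
    have hyv : ‖y‖ • v = y := by
      rw [hv_def, smul_smul, mul_inv_cancel₀ (norm_ne_zero_iff.mpr hy), one_smul]
    have b3 : ‖y‖ * ‖u - v‖ ≤ 2 * ‖x - y‖ := by
      have e1 : ‖y‖ • u - y = (‖y‖ - ‖x‖) • u + (x - y) := by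
        rw [sub_smul, hxu]; abel
      have e2 : ‖‖y‖ • u - ‖y‖ • v‖ = ‖y‖ * ‖u - v‖ := by
        rw [← smul_sub, norm_smul, Real.norm_eq_abs, abs_of_nonneg (norm_nonneg y)]
      calc ‖y‖ * ‖u - v‖ = ‖‖y‖ • u - y‖ := by rw [← e2, hyv]
        _ = ‖(‖y‖ - ‖x‖) • u + (x - y)‖ := by rw [e1]
        _ ≤ ‖(‖y‖ - ‖x‖) • u‖ + ‖x - y‖ := norm_add_le _ _
        _ = |‖y‖ - ‖x‖| + ‖x - y‖ := by
            rw [norm_smul, Real.norm_eq_abs, hu, mul_one]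
        _ ≤ ‖y - x‖ + ‖x - y‖ := by
            have := abs_norm_sub_norm_le y x; linarith
        _ = 2 * ‖x - y‖ := by rw [norm_sub_rev y x]; ring
    have b4 : |‖x‖ - ‖y‖| ≤ ‖x - y‖ := abs_norm_sub_norm_le x y
    calc |(‖x‖ - ‖y‖) * (F u - F x₀) + ‖y‖ * (F u - F v)|
        ≤ |(‖x‖ - ‖y‖) * (F u - F x₀)| + |‖y‖ * (F u - F v)| := abs_add_le _ _
      _ = |‖x‖ - ‖y‖| * |F u - F x₀| + ‖y‖ * |F u - F v| := by
          rw [abs_mul, abs_mul, abs_of_nonneg (norm_nonneg y)]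
      _ ≤ ‖x - y‖ * (2 * K) + ‖y‖ * (K * ‖u - v‖) := by
          apply add_le_add
          · exact mul_le_mul b4 b1 (abs_nonneg _) (norm_nonneg _)
          · exact mul_le_mul_of_nonneg_left b2 (norm_nonneg y)
      _ ≤ 4 * K * ‖x - y‖ := by nlinarith [norm_nonneg (u - v), norm_nonneg y]
  have keyz : ∀ x : EuclideanSpace ℝ (Fin N), |G x| ≤ 4 * K * ‖x‖ := by
    intro x
    by_cases hx : x = 0
    · simp [hx, hG0]
    · rw [hGx x hx, abs_mul, abs_of_nonneg (norm_nonneg x)]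
      have := hb1 x hx
      nlinarith [norm_nonneg x]
  have h4 : (4 : ℝ) ≤ 2 * (π + 1) := by nlinarith [Real.pi_gt_three]
  constructor
  · intro x y
    have main : |G x - G y| ≤ 4 * K * ‖x - y‖ := by
      by_cases hx : x = 0
      · by_cases hy : y = 0
        · simp [hx, hy, hG0]
        · simpa [hx, hG0, norm_sub_rev] using keyz y
      · by_cases hy : y = 0
        · simpa [hy, hG0] using keyz x
        · exact key x y hx hy
    calc |G x - G y| ≤ 4 * K * ‖x - y‖ := main
      _ ≤ 2 * (π + 1) * K * ‖x - y‖ := by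
          nlinarith [norm_nonneg (x - y), mul_nonneg hK (norm_nonneg (x - y))]
  · intro x y hx hy
    have hune : ∀ z : EuclideanSpace ℝ (Fin N), z ≠ 0 →
        G (‖z‖⁻¹ • z) = F (‖z‖⁻¹ • z) - F x₀ := by
      intro z hz
      have h1 : ‖z‖⁻¹ • z ≠ 0 := by
        intro h
        have := hunit z hz
        rw [h] at this; simp at this
      rw [hGx _ h1, hunit z hz]
      simp
    rw [hune x hx, hune y hy]
    ring
end
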